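/- arXiv:1508.07306 — 2 statements merged into one kernel-verified Lean document; each statement's English description precedes it below -/
import Mathlib

section
/- Fix ε₁, ε₂ > 0 and let f be the density of Lap(1/ε₁) and F the CDF of Lap(1/ε₂). Define V_t = ∫_{−∞}^{∞} f(z)·(F(z)(1 − F(z−1)))^t dz and V'_t = ∫_{−∞}^{∞} f(z)·(F(z−1)(1 − F(z)))^t dz. Then for every E > 0 there exists a natural number t such that V_t > e^E · V'_t. -/
/-!
For `a ≥ 0` the Laplace CDF `F` satisfies the pointwise likelihood-ratio bound
`e^{εa} F(z - a) (1 - F z) ≤ F z (1 - F (z - a))` (on each of the three pieces of `F` it reduces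
to an identity between exponentials plus monotonicity of `F`). Raising to the `t`-th power and
integrating against the density gives `V_t ≥ e^{ε₂ t} V'_t`, and `V'_t > 0` since its integrand is
everywhere positive; so `t > E / ε₂` works.
-/

open MeasureTheory Real Set

/-- Density of the Laplace distribution with location 0 and scale `1/ε`. -/
noncomputable def lapDensity (ε x : ℝ) : ℝ :=
  (ε / 2) * Real.exp (-(ε * |x|))

/-- CDF of the Laplace distribution with location 0 and scale `1/ε`. -/
noncomputable def lapCDF (ε z : ℝ) : ℝ :=
  if z ≤ 0 then Real.exp (ε * z) / 2 else 1 - Real.exp (-(ε * z)) / 2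

section IntegralOfPow

variable {α : Type*} [MeasurableSpace α] {μ : Measure α} {f p q : α → ℝ}

theorem integral_pos_of_forall_pos [NeZero μ] (hf : Integrable f μ) (hpos : ∀ x, 0 < f x) :
    0 < ∫ x, f x ∂μ := by
  rw [integral_pos_iff_support_of_nonneg (fun x ↦ (hpos x).le) hf,
    Function.support_eq_univ fun x ↦ (hpos x).ne']
  exact Measure.measure_univ_pos.2 (NeZero.ne μ)

theorem MeasureTheory.Integrable.mul_pow_of_norm_le_one (hf : Integrable f μ) (hp : AEStronglyMeasurable p μ)
    (hp_le : ∀ x, ‖p x‖ ≤ 1) (t : ℕ) : Integrable (fun x ↦ f x * p x ^ t) μ :=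
  hf.mul_bdd (hp.pow t) (ae_of_all _ fun x ↦ by
    rw [norm_pow]; exact pow_le_one₀ (norm_nonneg _) (hp_le x))

theorem pow_mul_integral_mul_pow_le {c : ℝ} {t : ℕ} (hf : ∀ x, 0 ≤ f x) (hc : 0 ≤ c)
    (hq : ∀ x, 0 ≤ q x) (hqp : ∀ x, c * q x ≤ p x)
    (hfq : Integrable (fun x ↦ f x * q x ^ t) μ) (hfp : Integrable (fun x ↦ f x * p x ^ t) μ) :
    c ^ t * ∫ x, f x * q x ^ t ∂μ ≤ ∫ x, f x * p x ^ t ∂μ := by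
  rw [← integral_const_mul]
  refine integral_mono (hfq.const_mul _) hfp fun x ↦ ?_
  calc c ^ t * (f x * q x ^ t) = f x * (c * q x) ^ t := by ring
    _ ≤ f x * p x ^ t :=
      mul_le_mul_of_nonneg_left (pow_le_pow_left₀ (mul_nonneg hc (hq x)) (hqp x) t) (hf x)

end IntegralOfPow

section Laplace

variable {ε : ℝ}

theorem lapDensity_pos (hε : 0 < ε) (x : ℝ) : 0 < lapDensity ε x := by
  unfold lapDensity; positivity

theorem integrable_lapDensity (hε : 0 < ε) : Integrable (lapDensity ε) := by
  refine Integrable.const_mul ?_ (ε / 2)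
  rw [← integrableOn_univ, ← Iic_union_Ioi (a := 0), integrableOn_union]
  constructor
  · refine (integrableOn_exp_mul_Iic hε 0).congr_fun (fun x hx ↦ ?_) measurableSet_Iic
    rw [abs_of_nonpos hx, mul_neg, neg_neg]
  · refine (integrableOn_exp_mul_Ioi (neg_lt_zero.2 hε) 0).congr_fun (fun x hx ↦ ?_)
      measurableSet_Ioi
    simp only [abs_of_pos (mem_Ioi.1 hx), neg_mul]

theorem lapCDF_of_nonpos {z : ℝ} (hz : z ≤ 0) : lapCDF ε z = exp (ε * z) / 2 := if_pos hz

theorem lapCDF_of_pos {z : ℝ} (hz : 0 < z) : lapCDF ε z = 1 - exp (-(ε * z)) / 2 :=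
  if_neg hz.not_ge

@[fun_prop]
theorem measurable_lapCDF (ε : ℝ) : Measurable (lapCDF ε) :=
  Measurable.ite measurableSet_Iic (by fun_prop) (by fun_prop)

theorem lapCDF_pos (hε : 0 ≤ ε) (z : ℝ) : 0 < lapCDF ε z := by
  rcases le_or_gt z 0 with hz | hz
  · rw [lapCDF_of_nonpos hz]; positivity
  · have : exp (-(ε * z)) ≤ 1 := exp_le_one_iff.2 (by nlinarith)
    rw [lapCDF_of_pos hz]; linarith

theorem lapCDF_lt_one (hε : 0 ≤ ε) (z : ℝ) : lapCDF ε z < 1 := by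
  rcases le_or_gt z 0 with hz | hz
  · have : exp (ε * z) ≤ 1 := exp_le_one_iff.2 (mul_nonpos_of_nonneg_of_nonpos hε hz)
    rw [lapCDF_of_nonpos hz]; linarith
  · rw [lapCDF_of_pos hz]; linarith [exp_pos (-(ε * z))]

theorem lapCDF_monotone (hε : 0 ≤ ε) : Monotone (lapCDF ε) := by
  intro x y hxy
  rcases le_or_gt y 0 with hy | hy
  · rw [lapCDF_of_nonpos hy, lapCDF_of_nonpos (hxy.trans hy)]
    gcongr
  rcases le_or_gt x 0 with hx | hx
  · have : exp (ε * x) ≤ 1 := exp_le_one_iff.2 (mul_nonpos_of_nonneg_of_nonpos hε hx)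
    have : exp (-(ε * y)) ≤ 1 := exp_le_one_iff.2 (by nlinarith)
    rw [lapCDF_of_nonpos hx, lapCDF_of_pos hy]; linarith
  · rw [lapCDF_of_pos hx, lapCDF_of_pos hy]
    gcongr

theorem exp_mul_lapCDF_sub_mul_le (hε : 0 ≤ ε) {a : ℝ} (ha : 0 ≤ a) (z : ℝ) :
    exp (ε * a) * (lapCDF ε (z - a) * (1 - lapCDF ε z)) ≤
      lapCDF ε z * (1 - lapCDF ε (z - a)) := by
  have hmono : lapCDF ε (z - a) ≤ lapCDF ε z := lapCDF_monotone hε (by linarith)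
  rcases le_or_gt z 0 with hz | hz
  · have hshift : exp (ε * a) * lapCDF ε (z - a) = lapCDF ε z := by
      rw [lapCDF_of_nonpos hz, lapCDF_of_nonpos (by linarith), mul_div_assoc', ← exp_add]
      ring_nf
    rw [← mul_assoc, hshift]
    exact mul_le_mul_of_nonneg_left (by linarith) (lapCDF_pos hε z).le
  rcases le_or_gt (z - a) 0 with hza | hza
  · -- here the left side is exactly `1/4`, and both factors on the right are at least `1/2`
    have hprod : exp (ε * a) * (exp (ε * (z - a)) * exp (-(ε * z))) = 1 := by
      rw [← exp_add, ← exp_add]; ring_nf; exact exp_zero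
    have h₁ : exp (ε * (z - a)) ≤ 1 := exp_le_one_iff.2 (mul_nonpos_of_nonneg_of_nonpos hε hza)
    have h₂ : exp (-(ε * z)) ≤ 1 := exp_le_one_iff.2 (by nlinarith)
    rw [lapCDF_of_nonpos hza, lapCDF_of_pos hz]
    nlinarith [exp_pos (ε * (z - a)), exp_pos (-(ε * z))]
  · have hshift : exp (ε * a) * (1 - lapCDF ε z) = 1 - lapCDF ε (z - a) := by
      rw [lapCDF_of_pos hz, lapCDF_of_pos hza, sub_sub_cancel, sub_sub_cancel, mul_div_assoc',
        ← exp_add]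
      ring_nf
    rw [mul_left_comm, hshift]
    exact mul_le_mul_of_nonneg_right hmono (by linarith [lapCDF_lt_one hε (z - a)])

theorem lapCDF_mul_one_sub_lapCDF_pos (hε : 0 ≤ ε) (x y : ℝ) :
    0 < lapCDF ε x * (1 - lapCDF ε y) :=
  mul_pos (lapCDF_pos hε x) (sub_pos.2 (lapCDF_lt_one hε y))

theorem norm_lapCDF_mul_one_sub_lapCDF_le_one (hε : 0 ≤ ε) (x y : ℝ) :
    ‖lapCDF ε x * (1 - lapCDF ε y)‖ ≤ 1 := by
  rw [norm_of_nonneg (lapCDF_mul_one_sub_lapCDF_pos hε x y).le]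
  exact mul_le_one₀ (lapCDF_lt_one hε x).le (by linarith [lapCDF_lt_one hε y])
    (by linarith [lapCDF_pos hε y])

end Laplace

theorem gptt_not_dp (ε₁ ε₂ : ℝ) (hε₁ : 0 < ε₁) (hε₂ : 0 < ε₂) :
    ∀ E > (0 : ℝ), ∃ t : ℕ,
      (∫ z : ℝ, lapDensity ε₁ z * (lapCDF ε₂ z * (1 - lapCDF ε₂ (z - 1))) ^ t) >
        Real.exp E *
          ∫ z : ℝ, lapDensity ε₁ z * (lapCDF ε₂ (z - 1) * (1 - lapCDF ε₂ z)) ^ t := by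
  intro E _
  obtain ⟨t, ht⟩ := exists_nat_gt (E / ε₂)
  refine ⟨t, ?_⟩
  have hfp := (integrable_lapDensity hε₁).mul_pow_of_norm_le_one (by fun_prop)
    (fun z ↦ norm_lapCDF_mul_one_sub_lapCDF_le_one hε₂.le z (z - 1)) t
  have hfq := (integrable_lapDensity hε₁).mul_pow_of_norm_le_one (by fun_prop)
    (fun z ↦ norm_lapCDF_mul_one_sub_lapCDF_le_one hε₂.le (z - 1) z) t
  have hV'_pos := integral_pos_of_forall_pos hfq fun z ↦
    mul_pos (lapDensity_pos hε₁ z) (pow_pos (lapCDF_mul_one_sub_lapCDF_pos hε₂.le _ _) t)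
  have hE : exp E < exp ε₂ ^ t := by
    rw [← exp_nat_mul, exp_lt_exp]
    rw [div_lt_iff₀ hε₂] at ht
    linarith
  calc exp E * _ < exp ε₂ ^ t * _ := mul_lt_mul_of_pos_right hE hV'_pos
    _ ≤ _ := pow_mul_integral_mul_pow_le (fun z ↦ (lapDensity_pos hε₁ z).le) (exp_pos ε₂).le
      (fun z ↦ (lapCDF_mul_one_sub_lapCDF_pos hε₂.le _ _).le)
      (fun z ↦ by simpa using exp_mul_lapCDF_sub_mul_le hε₂.le zero_le_one z) hfq hfp
end

section
/- Let F be the CDF of Lap(1/ε) centered at 0, and consider queries with q₁(D) = m > 0 and q₂(D) = 0, threshold θ = 0, with noisy threshold θ̃ ∼ Lap(1/ε) and no query noise (v_i = ⊥ iff q_i < θ̃). Then P(v₁ = ⊥ and v₂ = ⊤) = 0, whereas the (incorrect) factored expression ∫ f(x)P(m < x)dx · ∫ f(x)P(0 ≥ x)dx equals (1 − F(m))·F(0) > 0. -/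
open MeasureTheory Real Set

/-- The true joint probability of (v₁ = ⊥, v₂ = ⊤), i.e. of `m < θ̃ ∧ 0 ≥ θ̃`,
is zero, while the incorrectly factored expression `(1 - F(m))·F(0)` is positive. -/
theorem flawed_decomposition (ε m : ℝ) (hε : 0 < ε) (hm : 0 < m) :
    (∫ x in {x : ℝ | m < x ∧ 0 ≥ x}, lapDensity ε x) = 0 ∧
    0 < (1 - lapCDF ε m) * lapCDF ε 0 := by
  constructor
  · have hset : {x : ℝ | m < x ∧ 0 ≥ x} = ∅ := by
      ext x; simp only [mem_setOf_eq, mem_empty_iff_false, iff_false, not_and, not_le]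
      intro hx; linarith
    rw [hset]; simp
  · have h1 : lapCDF ε m = 1 - Real.exp (-(ε * m)) / 2 := by
      unfold lapCDF; rw [if_neg]; nlinarith
    have h2 : lapCDF ε 0 = 1 / 2 := by
      unfold lapCDF; simp
    rw [h1, h2]
    have := Real.exp_pos (-(ε * m))
    nlinarith
end
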